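/- arXiv:1710.00064 — 3 statements merged into one kernel-verified Lean document; each statement's English description precedes it below -/
import Mathlib

section
/- Let X be a real symmetric positive definite n×n matrix and let Z be a real symmetric n×n matrix. Then the map t ↦ log(X + tZ) (defined for t in a neighborhood of 0, where X + tZ is still positive definite) is differentiable at t = 0 with derivative equal to the convergent improper integral ∫₀^∞ (X + τIₙ)^{−1} Z (X + τIₙ)^{−1} dτ. That is, lim_{h→0} (log(X + hZ) − log X)/h = ∫₀^∞ (X + τIₙ)^{−1} Z (X + τIₙ)^{−1} dτ. -/
open Matrix MeasureTheory

attribute [local instance] Matrix.normedAddCommGroup Matrix.normedSpace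

/-- Apply a scalar function to a real symmetric matrix via its spectral decomposition
(functional calculus); defined to be `0` on non-symmetric matrices. -/
noncomputable def matFun {n : ℕ} (f : ℝ → ℝ) (A : Matrix (Fin n) (Fin n) ℝ) :
    Matrix (Fin n) (Fin n) ℝ :=
  if hA : A.IsHermitian then
    (hA.eigenvectorUnitary : Matrix (Fin n) (Fin n) ℝ) * Matrix.diagonal (f ∘ hA.eigenvalues)
      * (star (hA.eigenvectorUnitary : Matrix (Fin n) (Fin n) ℝ))
  else 0

/-- The principal matrix logarithm of a real symmetric (positive definite) matrix, obtained by
applying `Real.log` to the eigenvalues in a spectral decomposition. -/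
noncomputable def matLog {n : ℕ} (A : Matrix (Fin n) (Fin n) ℝ) : Matrix (Fin n) (Fin n) ℝ :=
  matFun Real.log A


open Set Filter

namespace MatLogAux


lemma integrableOn_inv_sq_shift {a : ℝ} (ha : 0 < a) :
    IntegrableOn (fun τ : ℝ => ((a + τ)⁻¹) ^ 2) (Ioi 0) := by
  have hderiv : ∀ x ∈ Ici (0:ℝ), HasDerivAt (fun τ : ℝ => -((a + τ)⁻¹)) (((a + x)⁻¹) ^ 2) x := by
    intro x hx
    have hx' : (0:ℝ) ≤ x := hx
    have hne : a + x ≠ 0 := by positivity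
    have h1 : HasDerivAt (fun τ : ℝ => a + τ) 1 x := (hasDerivAt_id x).const_add a
    have h2 := (h1.inv hne).neg
    convert h2 using 1
    exacts [rfl, rfl, rfl, by field_simp]
  have htend : Tendsto (fun τ : ℝ => -((a + τ)⁻¹)) atTop (nhds 0) := by
    rw [show (0:ℝ) = -0 by ring]
    exact ((tendsto_inv_atTop_zero.comp (tendsto_atTop_add_const_left _ a tendsto_id)).neg)
  exact integrableOn_Ioi_deriv_of_nonneg' hderiv (fun x _ => by positivity) htend

lemma scalar_integrable {l : ℝ} (hl : 0 < l) :
    IntegrableOn (fun τ : ℝ => (1 + τ)⁻¹ - (l + τ)⁻¹) (Ioi 0) := by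
  set m := min 1 l with hm
  have hm0 : 0 < m := lt_min one_pos hl
  have hmeas : AEStronglyMeasurable (fun τ : ℝ => (1 + τ)⁻¹ - (l + τ)⁻¹)
      (volume.restrict (Ioi 0)) := by
    apply ContinuousOn.aestronglyMeasurable ?_ measurableSet_Ioi
    intro x hx
    have hx' : (0:ℝ) < x := hx
    have h1 : (1:ℝ) + x ≠ 0 := by positivity
    have h2 : l + x ≠ 0 := by positivity
    exact ((continuousAt_const.add continuousAt_id).inv₀ h1).continuousWithinAt.sub
      ((continuousAt_const.add continuousAt_id).inv₀ h2).continuousWithinAt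
  refine Integrable.mono' ((integrableOn_inv_sq_shift hm0).const_mul (|1 - l|)) hmeas ?_
  filter_upwards [ae_restrict_mem measurableSet_Ioi] with x hx
  simp only [Set.mem_Ioi] at hx
  have h1 : (0:ℝ) < 1 + x := by positivity
  have h2 : (0:ℝ) < l + x := by positivity
  have hmx : 0 < m + x := by positivity
  have key : (1 + x)⁻¹ - (l + x)⁻¹ = (l - 1) / ((1 + x) * (l + x)) := by
    field_simp
    ring
  have hle1 : m + x ≤ 1 + x := by simp [hm, min_le_left]
  have hle2 : m + x ≤ l + x := by simp [hm, min_le_right]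
  have hle : (m + x) * (m + x) ≤ (1 + x) * (l + x) := mul_le_mul hle1 hle2 hmx.le h1.le
  rw [key, Real.norm_eq_abs, abs_div, abs_of_pos (show (0:ℝ) < (1+x)*(l+x) by positivity),
    abs_sub_comm]
  calc |1 - l| / ((1 + x) * (l + x)) ≤ |1 - l| / ((m + x) * (m + x)) :=
        div_le_div_of_nonneg_left (abs_nonneg _) (by positivity) hle
    _ = |1 - l| * ((m + x)⁻¹) ^ 2 := by rw [sq, div_eq_mul_inv, mul_inv]

lemma scalar_integral {l : ℝ} (hl : 0 < l) :
    ∫ τ in Ioi (0:ℝ), ((1 + τ)⁻¹ - (l + τ)⁻¹) = Real.log l := by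
  have hderiv : ∀ x ∈ Ici (0:ℝ),
      HasDerivAt (fun τ : ℝ => Real.log (1 + τ) - Real.log (l + τ))
        ((1 + x)⁻¹ - (l + x)⁻¹) x := by
    intro x hx
    have hx' : (0:ℝ) ≤ x := hx
    have h1 : (1:ℝ) + x ≠ 0 := by positivity
    have h2 : l + x ≠ 0 := by positivity
    have d1 : HasDerivAt (fun τ : ℝ => Real.log (1 + τ)) (1 + x)⁻¹ x := by
      have := (Real.hasDerivAt_log h1).comp x ((hasDerivAt_id x).const_add 1)
      simpa [Function.comp_def] using this
    have d2 : HasDerivAt (fun τ : ℝ => Real.log (l + τ)) (l + x)⁻¹ x := by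
      have := (Real.hasDerivAt_log h2).comp x ((hasDerivAt_id x).const_add l)
      simpa [Function.comp_def] using this
    exact d1.sub d2
  have htend : Tendsto (fun τ : ℝ => Real.log (1 + τ) - Real.log (l + τ)) atTop (nhds 0) := by
    have heq : ∀ᶠ τ : ℝ in atTop, Real.log (1 + τ) - Real.log (l + τ)
        = Real.log (1 + (1 - l) / (l + τ)) := by
      filter_upwards [eventually_gt_atTop 0] with τ hτ
      have h1 : (0:ℝ) < 1 + τ := by positivity
      have h2 : (0:ℝ) < l + τ := by positivity
      rw [← Real.log_div h1.ne' h2.ne']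
      congr 1
      field_simp
      ring
    rw [tendsto_congr' heq]
    have : Tendsto (fun τ : ℝ => 1 + (1 - l) / (l + τ)) atTop (nhds 1) := by
      have h0 : Tendsto (fun τ : ℝ => (1 - l) / (l + τ)) atTop (nhds 0) := by
        apply Tendsto.div_atTop tendsto_const_nhds
        exact tendsto_atTop_add_const_left _ l tendsto_id
      simpa using (tendsto_const_nhds.add h0)
    have := (Real.continuousAt_log (by norm_num : (1:ℝ) ≠ 0)).tendsto.comp this
    simpa [Function.comp_def] using this
  have := integral_Ioi_of_hasDerivAt_of_tendsto' hderiv (scalar_integrable hl) htend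
  rw [this]
  simp [Real.log_one]



variable {n : ℕ}

instance instContinuousENormMat : ContinuousENorm (Matrix (Fin n) (Fin n) ℝ) :=
  SeminormedAddGroup.toContinuousENorm

instance instPseudoMetrizableMat :
    TopologicalSpace.PseudoMetrizableSpace (Matrix (Fin n) (Fin n) ℝ) :=
  PseudoEMetricSpace.pseudoMetrizableSpace

lemma spectral' {M : Matrix (Fin n) (Fin n) ℝ} (hM : M.IsHermitian) :
    M = (hM.eigenvectorUnitary : Matrix (Fin n) (Fin n) ℝ) * diagonal hM.eigenvalues *
      star (hM.eigenvectorUnitary : Matrix (Fin n) (Fin n) ℝ) := by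
  convert hM.spectral_theorem using 3
  simp [Unitary.conjStarAlgAut_apply]

lemma conj_inv {V : Matrix (Fin n) (Fin n) ℝ} (hV : star V * V = 1)
    (hV' : V * star V = 1) {d : Fin n → ℝ} (hd : ∀ i, d i ≠ 0) :
    (V * diagonal d * star V)⁻¹ = V * diagonal (fun i => (d i)⁻¹) * star V := by
  apply inv_eq_right_inv
  have h1 : V * diagonal d * star V * (V * diagonal (fun i => (d i)⁻¹) * star V)
      = V * (diagonal d * ((star V * V) * (diagonal (fun i => (d i)⁻¹) * star V))) := by
    simp only [mul_assoc]
  rw [h1, hV, one_mul, ← mul_assoc (diagonal d), diagonal_mul_diagonal]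
  have h2 : (fun i => d i * (d i)⁻¹) = fun _ => (1:ℝ) := by
    funext i; exact mul_inv_cancel₀ (hd i)
  rw [h2, diagonal_one, one_mul, hV']

lemma smul_one_conj {V : Matrix (Fin n) (Fin n) ℝ} (hV' : V * star V = 1) (c : ℝ) :
    c • (1 : Matrix (Fin n) (Fin n) ℝ) = V * Matrix.diagonal (fun _ => c) * star V := by
  have : diagonal (fun _ : Fin n => c) = c • (1 : Matrix (Fin n) (Fin n) ℝ) := by
    rw [smul_one_eq_diagonal]
  rw [this, mul_smul_comm, smul_mul_assoc, mul_one, hV']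

lemma conj_norm_bound {V : Matrix (Fin n) (Fin n) ℝ} (hV : V ∈ Matrix.unitaryGroup (Fin n) ℝ)
    {d : Fin n → ℝ} {c : ℝ} (hc : 0 ≤ c) (hd : ∀ i, |d i| ≤ c) :
    ‖V * diagonal d * star V‖ ≤ n * c := by
  rw [Matrix.norm_le_iff (by positivity)]
  intro i j
  have hent : (V * diagonal d * star V) i j = ∑ k, V i k * d k * V j k := by
    rw [Matrix.mul_apply]
    congr 1
    funext k
    rw [Matrix.mul_diagonal, Matrix.star_apply, star_trivial]
  rw [hent]
  calc ‖∑ k, V i k * d k * V j k‖ ≤ ∑ k : Fin n, ‖V i k * d k * V j k‖ := norm_sum_le _ _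
    _ ≤ ∑ k : Fin n, c := by
        apply Finset.sum_le_sum
        intro k _
        have h1 : ‖V i k‖ ≤ 1 := entry_norm_bound_of_unitary hV i k
        have h2 : ‖V j k‖ ≤ 1 := entry_norm_bound_of_unitary hV j k
        calc ‖V i k * d k * V j k‖ = |V i k| * |d k| * |V j k| := by
              simp [Real.norm_eq_abs, abs_mul]
          _ ≤ 1 * c * 1 := by
              gcongr
              · exact h1
              · exact hd k
              · exact h2
          _ = c := by ring
    _ = n * c := by simp [Finset.sum_const, mul_comm]

lemma eigenvalues_ge {M : Matrix (Fin n) (Fin n) ℝ} (hM : M.IsHermitian) {a : ℝ}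
    (h : (M - a • 1).PosSemidef) (i : Fin n) : a ≤ hM.eigenvalues i := by
  have hv := hM.eigenvalues_eq i
  set v : Fin n → ℝ := ⇑(hM.eigenvectorBasis i) with hvdef
  have hnorm : v ⬝ᵥ v = 1 := by
    have h1 : ‖hM.eigenvectorBasis i‖ = 1 := hM.eigenvectorBasis.orthonormal.1 i
    have h2 : ‖hM.eigenvectorBasis i‖ ^ 2 = 1 := by rw [h1]; norm_num
    rw [EuclideanSpace.norm_eq] at h2
    rw [Real.sq_sqrt (by positivity)] at h2
    simpa [dotProduct, Real.norm_eq_abs, sq_abs, pow_two] using h2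
  have hq := h.dotProduct_mulVec_nonneg v
  rw [sub_mulVec, dotProduct_sub, smul_mulVec, one_mulVec, dotProduct_smul,
    star_trivial] at hq
  rw [star_trivial] at hv
  simp only [smul_eq_mul, hnorm, mul_one] at hq
  have : hM.eigenvalues i = v ⬝ᵥ (M *ᵥ v) := by simpa using hv
  linarith


lemma matLog_eq {n : ℕ} {M : Matrix (Fin n) (Fin n) ℝ} (hM : M.IsHermitian) :
    matLog M = (hM.eigenvectorUnitary : Matrix (Fin n) (Fin n) ℝ)
      * diagonal (Real.log ∘ hM.eigenvalues)
      * star (hM.eigenvectorUnitary : Matrix (Fin n) (Fin n) ℝ) := by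
  simp only [matLog, matFun]
  rw [dif_pos hM]

lemma diag_eq_sum {n : ℕ} (d : Fin n → ℝ) :
    diagonal d = ∑ i, d i • diagonal (Pi.single i (1:ℝ)) := by
  ext j k
  by_cases h : j = k <;>
    simp [diagonal_apply, h, Pi.single_apply, Matrix.sum_apply, Finset.sum_ite_eq']

lemma conj_diag_sum {n : ℕ} (V : Matrix (Fin n) (Fin n) ℝ) (d : Fin n → ℝ) :
    V * diagonal d * star V
      = ∑ i, d i • (V * diagonal (Pi.single i (1:ℝ)) * star V) := by
  conv_lhs => rw [diag_eq_sum d]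
  rw [Finset.mul_sum, Finset.sum_mul]
  congr 1
  funext i
  rw [mul_smul_comm, smul_mul_assoc]

lemma conj_add {n : ℕ} (V : Matrix (Fin n) (Fin n) ℝ) (d e : Fin n → ℝ) :
    V * diagonal d * star V + V * diagonal e * star V = V * diagonal (fun i => d i + e i) * star V := by
  rw [← add_mul, ← mul_add, diagonal_add]

lemma conj_sub {n : ℕ} (V : Matrix (Fin n) (Fin n) ℝ) (d e : Fin n → ℝ) :
    V * diagonal d * star V - V * diagonal e * star V = V * diagonal (fun i => d i - e i) * star V := by
  rw [← sub_mul, ← mul_sub, diagonal_sub]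

lemma matLog_rep {n : ℕ} {M : Matrix (Fin n) (Fin n) ℝ} (hM : M.PosDef) :
    IntegrableOn
      (fun τ : ℝ => (1+τ)⁻¹ • (1 : Matrix (Fin n) (Fin n) ℝ) - (M + τ • 1)⁻¹) (Ioi 0) ∧
    matLog M = ∫ τ in Ioi (0:ℝ),
      ((1+τ)⁻¹ • (1 : Matrix (Fin n) (Fin n) ℝ) - (M + τ • 1)⁻¹) := by
  have hH := hM.isHermitian
  set V := (hH.eigenvectorUnitary : Matrix (Fin n) (Fin n) ℝ) with hVdef
  have hV : star V * V = 1 := mem_unitaryGroup_iff'.mp hH.eigenvectorUnitary.2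
  have hV' : V * star V = 1 := mem_unitaryGroup_iff.mp hH.eigenvectorUnitary.2
  set μ := hH.eigenvalues with hμdef
  have hμ : ∀ i, 0 < μ i := hM.eigenvalues_pos
  set E : Fin n → Matrix (Fin n) (Fin n) ℝ :=
    fun i => V * diagonal (Pi.single i (1:ℝ)) * star V with hEdef
  set g : Fin n → ℝ → ℝ := fun i τ => (1+τ)⁻¹ - (μ i + τ)⁻¹ with hgdef
  have hpt : ∀ τ ∈ Ioi (0:ℝ),
      (1+τ)⁻¹ • (1 : Matrix (Fin n) (Fin n) ℝ) - (M + τ • 1)⁻¹ = ∑ i, g i τ • E i := by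
    intro τ hτ
    have hτ0 : (0:ℝ) < τ := hτ
    have hMτ : M + τ • 1 = V * diagonal (fun i => μ i + τ) * star V := by
      conv_lhs => rw [spectral' hH, smul_one_conj hV' τ]
      exact conj_add V μ (fun _ => τ)
    have hne : ∀ i, μ i + τ ≠ 0 := by
      intro i
      have := hμ i
      positivity
    have hinv : (M + τ • 1)⁻¹
        = V * diagonal (fun i => (μ i + τ)⁻¹) * star V := by
      rw [hMτ]
      exact conj_inv hV hV' hne
    rw [hinv, smul_one_conj hV' ((1+τ)⁻¹), conj_sub, conj_diag_sum]
  have hgi : ∀ i, IntegrableOn (g i) (Ioi 0) := fun i => scalar_integrable (hμ i)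
  have hΦint : IntegrableOn (fun τ => ∑ i, g i τ • E i) (Ioi 0) :=
    integrable_finset_sum _ (fun i _ => ((hgi i).smul_const (E i)))
  have hint : IntegrableOn
      (fun τ : ℝ => (1+τ)⁻¹ • (1 : Matrix (Fin n) (Fin n) ℝ) - (M + τ • 1)⁻¹) (Ioi 0) :=
    hΦint.congr_fun (fun τ hτ => (hpt τ hτ).symm) measurableSet_Ioi
  refine ⟨hint, ?_⟩
  rw [setIntegral_congr_fun measurableSet_Ioi hpt,
    integral_finset_sum _ (fun i _ => ((hgi i).smul_const (E i)))]
  simp_rw [integral_smul_const]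
  have hval : ∀ i, (∫ τ in Ioi (0:ℝ), g i τ) = Real.log (μ i) :=
    fun i => scalar_integral (hμ i)
  rw [matLog_eq hH, conj_diag_sum]
  congr 1
  funext i
  rw [hval i]
  rfl

lemma norm_mul_le' {n : ℕ} (A B : Matrix (Fin n) (Fin n) ℝ) : ‖A * B‖ ≤ n * ‖A‖ * ‖B‖ := by
  rw [Matrix.norm_le_iff (by positivity)]
  intro i j
  rw [Matrix.mul_apply]
  calc ‖∑ k, A i k * B k j‖ ≤ ∑ k : Fin n, ‖A i k * B k j‖ := norm_sum_le _ _
    _ ≤ ∑ k : Fin n, ‖A‖ * ‖B‖ := by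
        refine Finset.sum_le_sum fun k _ => ?_
        rw [norm_mul]
        exact mul_le_mul (norm_entry_le_entrywise_sup_norm A)
          (norm_entry_le_entrywise_sup_norm B) (norm_nonneg _) (norm_nonneg _)
    _ = n * ‖A‖ * ‖B‖ := by simp [Finset.sum_const, mul_assoc]

lemma exists_c {n : ℕ} {X : Matrix (Fin n) (Fin n) ℝ} (hX : X.PosDef) :
    ∃ c : ℝ, 0 < c ∧ (X - c • 1).PosSemidef := by
  rcases Nat.eq_zero_or_pos n with h0 | hpos
  · refine ⟨1, one_pos, ?_, ?_⟩
    · subst h0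
      ext i j
      exact i.elim0
    · subst h0
      intro x
      simp [Subsingleton.elim x 0]
  · have hne : Nonempty (Fin n) := Fin.pos_iff_nonempty.mp hpos
    have hH := hX.isHermitian
    set V := (hH.eigenvectorUnitary : Matrix (Fin n) (Fin n) ℝ) with hVdef
    have hV' : V * star V = 1 := mem_unitaryGroup_iff.mp hH.eigenvectorUnitary.2
    set μ := hH.eigenvalues with hμdef
    set c := Finset.univ.inf' Finset.univ_nonempty μ with hcdef
    refine ⟨c, ?_, ?_⟩
    · obtain ⟨i, _, hi⟩ := Finset.exists_mem_eq_inf' Finset.univ_nonempty μ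
      rw [hcdef, hi]
      exact hX.eigenvalues_pos i
    · have heq : X - c • 1 = V * diagonal (fun i => μ i - c) * star V := by
        conv_lhs => rw [spectral' hH, smul_one_conj hV' c]
        exact conj_sub V μ (fun _ => c)
      rw [heq]
      have hd : (diagonal (fun i => μ i - c)).PosSemidef := by
        refine Matrix.PosSemidef.diagonal ?_
        intro i
        simp only [Pi.zero_apply]
        exact sub_nonneg.2 (Finset.inf'_le _ (Finset.mem_univ i))
      have := hd.mul_mul_conjTranspose_same V
      simpa [Matrix.star_eq_conjTranspose] using this

lemma quad_bound {n : ℕ} (Z : Matrix (Fin n) (Fin n) ℝ) (x : Fin n → ℝ) :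
    |x ⬝ᵥ (Z *ᵥ x)| ≤ (n * ‖Z‖) * (x ⬝ᵥ x) := by
  have hexp : x ⬝ᵥ (Z *ᵥ x) = ∑ i, ∑ j, x i * Z i j * x j := by
    simp [dotProduct, mulVec, Finset.mul_sum, mul_assoc]
  have hxx : x ⬝ᵥ x = ∑ i, x i ^ 2 := by
    simp [dotProduct, pow_two]
  rw [hexp, hxx]
  calc |∑ i, ∑ j, x i * Z i j * x j| ≤ ∑ i, |∑ j, x i * Z i j * x j| :=
        Finset.abs_sum_le_sum_abs _ _
    _ ≤ ∑ i, ∑ j, |x i * Z i j * x j| :=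
        Finset.sum_le_sum fun i _ => Finset.abs_sum_le_sum_abs _ _
    _ ≤ ∑ i : Fin n, ∑ j : Fin n, ‖Z‖ * ((x i ^ 2 + x j ^ 2) / 2) := by
        refine Finset.sum_le_sum fun i _ => Finset.sum_le_sum fun j _ => ?_
        have hZb : |Z i j| ≤ ‖Z‖ := norm_entry_le_entrywise_sup_norm Z
        have hZ0 : (0:ℝ) ≤ ‖Z‖ := norm_nonneg _
        have hamgm : |x i| * |x j| ≤ (x i ^ 2 + x j ^ 2) / 2 := by
          nlinarith [sq_nonneg (|x i| - |x j|), sq_abs (x i), sq_abs (x j)]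
        calc |x i * Z i j * x j| = |x i| * |Z i j| * |x j| := by rw [abs_mul, abs_mul]
          _ ≤ |x i| * ‖Z‖ * |x j| := by
              gcongr
          _ = ‖Z‖ * (|x i| * |x j|) := by ring
          _ ≤ ‖Z‖ * ((x i ^ 2 + x j ^ 2) / 2) := by gcongr
    _ = (n * ‖Z‖) * ∑ i, x i ^ 2 := by
        have key : ∀ i : Fin n, ∑ j : Fin n, ‖Z‖ * ((x i ^ 2 + x j ^ 2) / 2)
            = ‖Z‖ * ((n * x i ^ 2 + ∑ j, x j ^ 2) / 2) := by
          intro i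
          rw [← Finset.mul_sum]
          congr 1
          rw [← Finset.sum_div]
          congr 1
          rw [Finset.sum_add_distrib, Finset.sum_const, Finset.card_univ]
          simp [nsmul_eq_mul]
        simp_rw [key]
        rw [← Finset.mul_sum, ← Finset.sum_div, Finset.sum_add_distrib, ← Finset.mul_sum,
          Finset.sum_const, Finset.card_univ]
        simp only [nsmul_eq_mul, Fintype.card_fin]
        ring

lemma smul_add_posSemidef {n : ℕ} {Z : Matrix (Fin n) (Fin n) ℝ} (hZ : Z.IsHermitian)
    {t b : ℝ} (hb : |t| * (n * ‖Z‖) ≤ b) : (t • Z + b • 1).PosSemidef := by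
  refine PosSemidef.of_dotProduct_mulVec_nonneg ?_ ?_
  · show (t • Z + b • (1:Matrix (Fin n) (Fin n) ℝ))ᴴ = _
    rw [conjTranspose_add, conjTranspose_smul, conjTranspose_smul, conjTranspose_one, hZ.eq]
    simp
  · intro x
    rw [add_mulVec, dotProduct_add, smul_mulVec, smul_mulVec, one_mulVec,
      dotProduct_smul, dotProduct_smul, star_trivial]
    have hxx : (0:ℝ) ≤ x ⬝ᵥ x := by
      simp only [dotProduct]
      exact Finset.sum_nonneg fun i _ => mul_self_nonneg _
    have hform := quad_bound Z x
    set f := x ⬝ᵥ (Z *ᵥ x)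
    set xx := x ⬝ᵥ x
    have h1 : -(|t| * |f|) ≤ t * f := by rw [← abs_mul]; exact neg_abs_le _
    have h2 : |t| * |f| ≤ |t| * ((n * ‖Z‖) * xx) := mul_le_mul_of_nonneg_left hform (abs_nonneg t)
    have h4 : (|t| * (n * ‖Z‖)) * xx ≤ b * xx := mul_le_mul_of_nonneg_right hb hxx
    simp only [smul_eq_mul]
    nlinarith

lemma inv_norm_bound {n : ℕ} {M : Matrix (Fin n) (Fin n) ℝ} (hH : M.IsHermitian) {a : ℝ}
    (ha : 0 < a) (hPSD : (M - a • 1).PosSemidef) :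
    M.PosDef ∧ ‖M⁻¹‖ ≤ n * a⁻¹ := by
  have hsmul : (a • (1:Matrix (Fin n) (Fin n) ℝ)).PosDef := by
    rw [smul_one_eq_diagonal]
    exact Matrix.PosDef.diagonal fun i => ha
  have hpd : M.PosDef := by
    have heq : M = (M - a • 1) + a • 1 := by abel
    rw [heq]
    exact Matrix.PosDef.posSemidef_add hPSD hsmul
  refine ⟨hpd, ?_⟩
  set V := (hH.eigenvectorUnitary : Matrix (Fin n) (Fin n) ℝ) with hVdef
  have hV : star V * V = 1 := mem_unitaryGroup_iff'.mp hH.eigenvectorUnitary.2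
  have hV' : V * star V = 1 := mem_unitaryGroup_iff.mp hH.eigenvectorUnitary.2
  set μ := hH.eigenvalues with hμdef
  have hμa : ∀ i, a ≤ μ i := eigenvalues_ge hH hPSD
  have hμ0 : ∀ i, μ i ≠ 0 := fun i => (lt_of_lt_of_le ha (hμa i)).ne'
  have hinv : M⁻¹ = V * diagonal (fun i => (μ i)⁻¹) * star V := by
    conv_lhs => rw [spectral' hH]
    exact conj_inv hV hV' hμ0
  rw [hinv]
  refine conj_norm_bound hH.eigenvectorUnitary.2 (by positivity) ?_
  intro i
  rw [abs_of_nonneg (inv_nonneg.2 (le_of_lt (lt_of_lt_of_le ha (hμa i))))]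
  exact inv_anti₀ ha (hμa i)

lemma resolvent {n : ℕ} {A B : Matrix (Fin n) (Fin n) ℝ} (hA : IsUnit A.det) (hB : IsUnit B.det) :
    A⁻¹ - B⁻¹ = A⁻¹ * (B - A) * B⁻¹ := by
  rw [mul_sub, sub_mul, Matrix.nonsing_inv_mul A hA, mul_assoc, Matrix.mul_nonsing_inv B hB,
    mul_one, one_mul]

lemma continuousAt_inv {n : ℕ} {A : Matrix (Fin n) (Fin n) ℝ} (h : A.det ≠ 0) :
    ContinuousAt (fun B : Matrix (Fin n) (Fin n) ℝ => B⁻¹) A := by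
  have heq : (fun B : Matrix (Fin n) (Fin n) ℝ => B⁻¹)
      = fun B => (B.det)⁻¹ • B.adjugate := by
    funext B
    rw [Matrix.inv_def, Ring.inverse_eq_inv]
  rw [heq]
  exact ((Continuous.matrix_det continuous_id).continuousAt.inv₀ h).smul
    (Continuous.matrix_adjugate continuous_id).continuousAt

end MatLogAux

/-- For `X` symmetric positive definite and `Z` symmetric, the map `t ↦ log (X + t Z)` is
differentiable at `t = 0`, with derivative the convergent improper integral
`∫₀^∞ (X + τ I)⁻¹ Z (X + τ I)⁻¹ dτ`. -/
theorem hasDerivAt_matLog {n : ℕ} (X Z : Matrix (Fin n) (Fin n) ℝ)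
    (hX : X.PosDef) (hZ : Z.IsHermitian) :
    @IntegrableOn ℝ _ _ _ SeminormedAddGroup.toContinuousENorm
      (fun τ : ℝ => (X + τ • (1 : Matrix (Fin n) (Fin n) ℝ))⁻¹ * Z *
        (X + τ • (1 : Matrix (Fin n) (Fin n) ℝ))⁻¹) (Set.Ioi 0) volume ∧
    HasDerivAt (fun t : ℝ => matLog (X + t • Z))
      (∫ τ in Set.Ioi (0 : ℝ),
        (X + τ • (1 : Matrix (Fin n) (Fin n) ℝ))⁻¹ * Z *
          (X + τ • (1 : Matrix (Fin n) (Fin n) ℝ))⁻¹) 0 := by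
  classical
  open Set Filter MatLogAux in
  obtain ⟨c, hc, hcPSD⟩ := MatLogAux.exists_c hX
  set a := c / 2 with hadef
  have ha : 0 < a := by positivity
  set δ := a / (n * ‖Z‖ + 1) with hδdef
  have hδ : 0 < δ := by positivity
  set F : ℝ → ℝ → Matrix (Fin n) (Fin n) ℝ :=
    fun t τ => (X + τ • 1)⁻¹ * Z * (X + t • Z + τ • 1)⁻¹ with hFdef
  have hXτ : ∀ τ : ℝ, X + τ • (1 : Matrix (Fin n) (Fin n) ℝ) = X + (0:ℝ) • Z + τ • 1 := by
    intro τ; simp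
  have hM : ∀ t τ : ℝ, (X + t • Z + τ • 1).IsHermitian := by
    intro t τ
    show _ᴴ = _
    rw [conjTranspose_add, conjTranspose_add, conjTranspose_smul, conjTranspose_smul,
      conjTranspose_one, hX.isHermitian.eq, hZ.eq]
    simp
  have hPSDkey : ∀ t τ : ℝ, |t| ≤ δ → 0 ≤ τ →
      (X + t • Z + τ • 1 - (a + τ) • 1).PosSemidef := by
    intro t τ ht hτ
    have h1 : (t • Z + a • (1 : Matrix (Fin n) (Fin n) ℝ)).PosSemidef := by
      apply MatLogAux.smul_add_posSemidef hZ
      have hnz : (0:ℝ) < n * ‖Z‖ + 1 := by positivity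
      calc |t| * (n * ‖Z‖) ≤ δ * (n * ‖Z‖ + 1) :=
            mul_le_mul ht (by linarith) (by positivity) hδ.le
        _ = a := by rw [hδdef]; field_simp
    have hc2 : c = a + a := by rw [hadef]; ring
    have heq : X + t • Z + τ • 1 - (a + τ) • 1
        = (X - c • 1) + (t • Z + a • (1 : Matrix (Fin n) (Fin n) ℝ)) := by
      rw [hc2]
      module
    rw [heq]
    exact hcPSD.add h1
  have hkey : ∀ t τ : ℝ, |t| ≤ δ → 0 ≤ τ →
      (X + t • Z + τ • 1).PosDef ∧ ‖(X + t • Z + τ • 1)⁻¹‖ ≤ n * ((a + τ)⁻¹) :=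
    fun t τ ht hτ => MatLogAux.inv_norm_bound (hM t τ) (by positivity) (hPSDkey t τ ht hτ)
  have h0δ : |(0:ℝ)| ≤ δ := by simpa using hδ.le
  have hbound : ∀ t τ : ℝ, |t| ≤ δ → 0 ≤ τ →
      ‖F t τ‖ ≤ (n^4 * ‖Z‖) * ((a + τ)⁻¹)^2 := by
    intro t τ ht hτ
    have h1 := (hkey 0 τ h0δ hτ).2
    rw [← hXτ τ] at h1
    have h2 := (hkey t τ ht hτ).2
    have ha' : (0:ℝ) ≤ (a + τ)⁻¹ := by positivity
    calc ‖F t τ‖ ≤ n * ‖(X + τ • 1)⁻¹ * Z‖ * ‖(X + t • Z + τ • 1)⁻¹‖ :=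
          MatLogAux.norm_mul_le' _ _
      _ ≤ n * (n * ‖(X + τ • 1)⁻¹‖ * ‖Z‖) * ‖(X + t • Z + τ • 1)⁻¹‖ := by
          gcongr
          exact MatLogAux.norm_mul_le' _ _
      _ ≤ n * (n * (n * ((a + τ)⁻¹)) * ‖Z‖) * (n * ((a + τ)⁻¹)) := by
          gcongr
      _ = (n^4 * ‖Z‖) * ((a + τ)⁻¹)^2 := by ring
  have hg : IntegrableOn (fun τ : ℝ => (n^4 * ‖Z‖) * ((a + τ)⁻¹)^2) (Ioi 0) :=
    (MatLogAux.integrableOn_inv_sq_shift ha).const_mul _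
  have hcont : ∀ t : ℝ, |t| ≤ δ → ContinuousOn (F t) (Ioi 0) := by
    intro t ht τ hτ
    have hτ0 : (0:ℝ) < τ := hτ
    have hdet1 : (X + τ • (1 : Matrix (Fin n) (Fin n) ℝ)).det ≠ 0 := by
      rw [hXτ τ]
      exact ((hkey 0 τ h0δ hτ0.le).1.det_pos).ne'
    have hdet2 : (X + t • Z + τ • (1 : Matrix (Fin n) (Fin n) ℝ)).det ≠ 0 :=
      ((hkey t τ ht hτ0.le).1.det_pos).ne'
    have hc1 : Continuous (fun s : ℝ => X + s • (1 : Matrix (Fin n) (Fin n) ℝ)) :=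
      continuous_const.add (continuous_id.smul continuous_const)
    have hc2 : Continuous (fun s : ℝ => X + t • Z + s • (1 : Matrix (Fin n) (Fin n) ℝ)) :=
      continuous_const.add (continuous_id.smul continuous_const)
    have k1 : ContinuousAt (fun s : ℝ => (X + s • (1 : Matrix (Fin n) (Fin n) ℝ))⁻¹) τ := by
      show ContinuousAt ((fun B : Matrix (Fin n) (Fin n) ℝ => B⁻¹)
        ∘ (fun s : ℝ => X + s • (1 : Matrix (Fin n) (Fin n) ℝ))) τ
      exact ContinuousAt.comp (MatLogAux.continuousAt_inv hdet1) hc1.continuousAt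
    have k2 : ContinuousAt
        (fun s : ℝ => (X + t • Z + s • (1 : Matrix (Fin n) (Fin n) ℝ))⁻¹) τ := by
      show ContinuousAt ((fun B : Matrix (Fin n) (Fin n) ℝ => B⁻¹)
        ∘ (fun s : ℝ => X + t • Z + s • (1 : Matrix (Fin n) (Fin n) ℝ))) τ
      exact ContinuousAt.comp (MatLogAux.continuousAt_inv hdet2) hc2.continuousAt
    exact ((k1.mul continuousAt_const).mul k2).continuousWithinAt
  have hFint : ∀ t : ℝ, |t| ≤ δ → IntegrableOn (F t) (Ioi 0) := by
    intro t ht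
    refine Integrable.mono' hg ((hcont t ht).aestronglyMeasurable measurableSet_Ioi) ?_
    filter_upwards [ae_restrict_mem measurableSet_Ioi] with τ hτ
    exact hbound t τ ht (le_of_lt hτ)
  have hF0eq : (fun τ : ℝ => (X + τ • (1 : Matrix (Fin n) (Fin n) ℝ))⁻¹ * Z *
      (X + τ • (1 : Matrix (Fin n) (Fin n) ℝ))⁻¹) = F 0 := by
    funext τ
    rw [hFdef]
    simp
  have hPD : ∀ t : ℝ, |t| ≤ δ → (X + t • Z).PosDef := by
    intro t ht
    have := (hkey t 0 ht le_rfl).1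
    simpa using this
  have hev : ∀ᶠ t in nhdsWithin (0:ℝ) {(0:ℝ)}ᶜ, |t| ≤ δ := by
    apply eventually_nhdsWithin_of_eventually_nhds
    have : ∀ᶠ t in nhds (0:ℝ), |t - 0| < δ := eventually_abs_sub_lt 0 hδ
    filter_upwards [this] with t ht
    rw [sub_zero] at ht
    exact ht.le
  have htendI : Tendsto (fun t => ∫ τ in Ioi (0:ℝ), F t τ) (nhdsWithin (0:ℝ) {(0:ℝ)}ᶜ)
      (nhds (∫ τ in Ioi (0:ℝ), F 0 τ)) := by
    apply tendsto_integral_filter_of_dominated_convergence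
      (bound := fun τ : ℝ => (n^4 * ‖Z‖) * ((a + τ)⁻¹)^2)
    · filter_upwards [hev] with t ht
      exact (hcont t ht).aestronglyMeasurable measurableSet_Ioi
    · filter_upwards [hev] with t ht
      filter_upwards [ae_restrict_mem measurableSet_Ioi] with τ hτ
      exact hbound t τ ht (le_of_lt hτ)
    · exact hg
    · filter_upwards [ae_restrict_mem measurableSet_Ioi] with τ hτ
      have hτ0 : (0:ℝ) < τ := hτ
      have hdet : (X + (0:ℝ) • Z + τ • (1 : Matrix (Fin n) (Fin n) ℝ)).det ≠ 0 :=
        ((hkey 0 τ h0δ hτ0.le).1.det_pos).ne'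
      have hcA : Continuous (fun t : ℝ => X + t • Z + τ • (1 : Matrix (Fin n) (Fin n) ℝ)) :=
        (continuous_const.add (continuous_id.smul continuous_const)).add continuous_const
      have k : ContinuousAt
          (fun t : ℝ => (X + t • Z + τ • (1 : Matrix (Fin n) (Fin n) ℝ))⁻¹) 0 := by
        show ContinuousAt ((fun B : Matrix (Fin n) (Fin n) ℝ => B⁻¹)
          ∘ (fun t : ℝ => X + t • Z + τ • (1 : Matrix (Fin n) (Fin n) ℝ))) 0
        exact ContinuousAt.comp (MatLogAux.continuousAt_inv hdet) hcA.continuousAt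
      have : ContinuousAt (fun t => F t τ) 0 := continuousAt_const.mul k
      exact this.tendsto.mono_left nhdsWithin_le_nhds
  have hslope : ∀ t : ℝ, t ≠ 0 → |t| ≤ δ →
      matLog (X + t • Z) - matLog X = t • ∫ τ in Ioi (0:ℝ), F t τ := by
    intro t htne ht
    obtain ⟨hint1, hrep1⟩ := MatLogAux.matLog_rep (hPD t ht)
    obtain ⟨hint0, hrep0⟩ := MatLogAux.matLog_rep hX
    rw [hrep1, hrep0, ← integral_sub hint1 hint0, ← integral_smul]
    apply setIntegral_congr_fun measurableSet_Ioi
    intro τ hτ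
    have hτ0 : (0:ℝ) < τ := hτ
    have hA : IsUnit (X + τ • (1 : Matrix (Fin n) (Fin n) ℝ)).det := by
      rw [hXτ τ]
      exact ((hkey 0 τ h0δ hτ0.le).1.det_pos).ne'.isUnit
    have hB : IsUnit (X + t • Z + τ • (1 : Matrix (Fin n) (Fin n) ℝ)).det :=
      ((hkey t τ ht hτ0.le).1.det_pos).ne'.isUnit
    have hres := MatLogAux.resolvent hA hB
    have hBA : (X + t • Z + τ • (1 : Matrix (Fin n) (Fin n) ℝ))
        - (X + τ • (1 : Matrix (Fin n) (Fin n) ℝ)) = t • Z := by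
      abel
    have hfinal : (X + τ • (1 : Matrix (Fin n) (Fin n) ℝ))⁻¹
        - (X + t • Z + τ • (1 : Matrix (Fin n) (Fin n) ℝ))⁻¹ = t • F t τ := by
      rw [hres, hBA, hFdef]
      rw [mul_smul_comm, smul_mul_assoc]
    show ((1+τ)⁻¹ • 1 - (X + t • Z + τ • 1)⁻¹) - ((1+τ)⁻¹ • 1 - (X + τ • 1)⁻¹) = t • F t τ
    rw [← hfinal]
    abel
  refine ⟨by rw [hF0eq]; exact hFint 0 h0δ, ?_⟩
  apply hasDerivAt_iff_tendsto_slope.mpr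
  have hev' : ∀ᶠ t in nhdsWithin (0:ℝ) {(0:ℝ)}ᶜ,
      (fun t => ∫ τ in Ioi (0:ℝ), F t τ) t = slope (fun t : ℝ => matLog (X + t • Z)) 0 t := by
    filter_upwards [hev, self_mem_nhdsWithin] with t ht htne
    have htne' : t ≠ 0 := htne
    rw [slope_def_module, sub_zero]
    have h00 : matLog (X + (0:ℝ) • Z) = matLog X := by simp
    rw [h00, hslope t htne' ht, smul_smul, inv_mul_cancel₀ htne', one_smul]
  rw [hF0eq]
  exact htendI.congr' hev'
end

section
/- Let X be a real symmetric positive definite n×n matrix. Then the improper integral ∫₀^∞ (X + τIₙ)^{−1} (log X) (X + τIₙ)^{−1} dτ converges and equals X^{−1} log X, which also equals (log X) X^{−1}. -/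
open Matrix MeasureTheory

attribute [local instance] Matrix.normedAddCommGroup Matrix.normedSpace

/-!
Diagonalise `X = U diag(λ) Uᵀ` with `U` orthogonal. The map `d ↦ U diag(d) Uᵀ` is an
`ℝ`-algebra homomorphism `(Fin n → ℝ) → Matrix`, so it carries inverses to inverses and the
integrand to the image of the diagonal integrand `τ ↦ log λᵢ / (λᵢ + τ)²`. Being a continuous linear
map, it commutes with the integral, and the scalar identity `∫₀^∞ (a + τ)⁻² dτ = a⁻¹` finishes.
-/

open Set Filter Topology Unitary

theorem integrableOn_and_integral_Ioi_inv_add_mul_inv_add {a : ℝ} (ha : 0 < a) :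
    IntegrableOn (fun τ : ℝ => (a + τ)⁻¹ * (a + τ)⁻¹) (Ioi 0) ∧
      ∫ τ in Ioi (0 : ℝ), (a + τ)⁻¹ * (a + τ)⁻¹ = a⁻¹ := by
  have hderiv : ∀ τ ∈ Ici (0 : ℝ),
      HasDerivAt (fun τ : ℝ => -(a + τ)⁻¹) ((a + τ)⁻¹ * (a + τ)⁻¹) τ := by
    intro τ hτ
    have hpos : 0 < a + τ := add_pos_of_pos_of_nonneg ha hτ
    refine (((hasDerivAt_id' τ).const_add a).inv hpos.ne').neg.congr_deriv ?_
    rw [neg_div, neg_neg, one_div, sq, mul_inv]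
  have hnonneg : ∀ τ ∈ Ioi (0 : ℝ), 0 ≤ (a + τ)⁻¹ * (a + τ)⁻¹ := fun τ _ => mul_self_nonneg _
  have hlim : Tendsto (fun τ : ℝ => -(a + τ)⁻¹) atTop (𝓝 0) := by
    simpa using (tendsto_atTop_add_const_left _ a tendsto_id).inv_tendsto_atTop.neg
  refine ⟨integrableOn_Ioi_deriv_of_nonneg' hderiv hnonneg hlim, ?_⟩
  simpa using integral_Ioi_of_hasDerivAt_of_nonneg' hderiv hnonneg hlim

theorem integrableOn_and_integral_Ioi_pi_resolvent {ι : Type*} [Fintype ι] {d : ι → ℝ}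
    (hd : ∀ i, 0 < d i) (c : ι → ℝ) :
    IntegrableOn (fun τ : ℝ => (d + τ • 1)⁻¹ * c * (d + τ • 1)⁻¹) (Ioi 0) ∧
      ∫ τ in Ioi (0 : ℝ), (d + τ • 1)⁻¹ * c * (d + τ • 1)⁻¹ = d⁻¹ * c := by
  have scalar := fun i => integrableOn_and_integral_Ioi_inv_add_mul_inv_add (hd i)
  have hcoord : ∀ i, (fun τ : ℝ => ((d + τ • 1)⁻¹ * c * (d + τ • 1)⁻¹) i) =
      fun τ => c i * ((d i + τ)⁻¹ * (d i + τ)⁻¹) := fun i => by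
    ext τ
    simp only [Pi.mul_apply, Pi.inv_apply, Pi.add_apply, Pi.smul_apply, Pi.one_apply,
      smul_eq_mul, mul_one]
    ring
  have hint : ∀ i, IntegrableOn (fun τ : ℝ => ((d + τ • 1)⁻¹ * c * (d + τ • 1)⁻¹) i) (Ioi 0) :=
    fun i => hcoord i ▸ (scalar i).1.const_mul (c i)
  refine ⟨Integrable.of_eval hint, funext fun i => ?_⟩
  rw [eval_integral hint, hcoord, integral_const_mul, (scalar i).2, Pi.mul_apply, Pi.inv_apply,
    mul_comm]

namespace Matrix

variable {ι : Type*} [Fintype ι] [DecidableEq ι]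

noncomputable def unitaryDiagonal (U : unitary (Matrix ι ι ℝ)) : (ι → ℝ) →ₐ[ℝ] Matrix ι ι ℝ :=
  (conjStarAlgAut ℝ _ U).toAlgEquiv.toAlgHom.comp (diagonalAlgHom ℝ)

theorem unitaryDiagonal_apply (U : unitary (Matrix ι ι ℝ)) (d : ι → ℝ) :
    unitaryDiagonal U d = U * diagonal d * star (U : Matrix ι ι ℝ) := rfl

theorem inv_unitaryDiagonal (U : unitary (Matrix ι ι ℝ)) {d : ι → ℝ} (hd : ∀ i, d i ≠ 0) :
    (unitaryDiagonal U d)⁻¹ = unitaryDiagonal U d⁻¹ :=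
  inv_eq_right_inv <| by
    rw [← map_mul, show d * d⁻¹ = 1 from funext fun i => mul_inv_cancel₀ (hd i), map_one]

theorem IsHermitian.eq_unitaryDiagonal {A : Matrix ι ι ℝ} (hA : A.IsHermitian) :
    A = unitaryDiagonal hA.eigenvectorUnitary hA.eigenvalues := by
  simpa [unitaryDiagonal_apply] using hA.spectral_theorem

end Matrix

theorem matFun_eq_unitaryDiagonal {n : ℕ} {A : Matrix (Fin n) (Fin n) ℝ} (hA : A.IsHermitian)
    (f : ℝ → ℝ) : matFun f A = unitaryDiagonal hA.eigenvectorUnitary (f ∘ hA.eigenvalues) :=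
  dif_pos hA

/-- For `X` symmetric positive definite, the improper integral
`∫₀^∞ (X + τ Iₙ)⁻¹ (log X) (X + τ Iₙ)⁻¹ dτ` converges and equals `X⁻¹ log X = (log X) X⁻¹`. -/
theorem integral_resolvent_log_resolvent {n : ℕ} (X : Matrix (Fin n) (Fin n) ℝ)
    (hX : X.PosDef) :
    @IntegrableOn _ _ _ _ SeminormedAddGroup.toContinuousENorm
      (fun τ : ℝ => (X + τ • (1 : Matrix (Fin n) (Fin n) ℝ))⁻¹ * matLog X *
        (X + τ • (1 : Matrix (Fin n) (Fin n) ℝ))⁻¹) (Set.Ioi 0) volume ∧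
    (∫ τ in Set.Ioi (0 : ℝ),
        (X + τ • (1 : Matrix (Fin n) (Fin n) ℝ))⁻¹ * matLog X *
          (X + τ • (1 : Matrix (Fin n) (Fin n) ℝ))⁻¹) = X⁻¹ * matLog X ∧
    X⁻¹ * matLog X = matLog X * X⁻¹ := by
  have hH := hX.isHermitian
  set φ := unitaryDiagonal hH.eigenvectorUnitary
  set μ := hH.eigenvalues
  have hμ : ∀ i, 0 < μ i := hX.eigenvalues_pos
  have hX_eq : X = φ μ := hH.eq_unitaryDiagonal
  have hlog : matLog X = φ (Real.log ∘ μ) := matFun_eq_unitaryDiagonal hH _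
  have hinv : X⁻¹ = φ μ⁻¹ := hX_eq ▸ inv_unitaryDiagonal _ fun i => (hμ i).ne'
  have hresolvent : EqOn
      (fun τ : ℝ => (X + τ • (1 : Matrix (Fin n) (Fin n) ℝ))⁻¹ * matLog X *
        (X + τ • (1 : Matrix (Fin n) (Fin n) ℝ))⁻¹)
      (fun τ => φ ((μ + τ • 1)⁻¹ * (Real.log ∘ μ) * (μ + τ • 1)⁻¹)) (Ioi 0) := by
    intro τ hτ
    have hshift : X + τ • 1 = φ (μ + τ • 1) := by rw [map_add, map_smul, map_one, hX_eq]
    have hpos : ∀ i, (μ + τ • 1) i ≠ 0 := fun i => by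
      simpa using (add_pos (hμ i) hτ).ne'
    simp only [hshift, hlog]
    rw [inv_unitaryDiagonal _ hpos, map_mul, map_mul]
  obtain ⟨hint, hval⟩ := integrableOn_and_integral_Ioi_pi_resolvent hμ (Real.log ∘ μ)
  let L : (Fin n → ℝ) →L[ℝ] Matrix (Fin n) (Fin n) ℝ := φ.toLinearMap.toContinuousLinearMap
  refine ⟨(L.integrableOn_comp hint).congr_fun hresolvent.symm measurableSet_Ioi, ?_, ?_⟩
  · rw [setIntegral_congr_fun measurableSet_Ioi hresolvent, hinv, hlog, ← map_mul, ← hval]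
    exact L.integral_comp_comm hint
  · rw [hinv, hlog, ← map_mul, ← map_mul, mul_comm]
end

section
/- Let P and P₀ be real symmetric positive definite n×n matrices, let S be a real symmetric n×n matrix, and let h ∈ ℝ. Define log(P P₀^{−1}) := P₀^{1/2} log(P₀^{−1/2} P P₀^{−1/2}) P₀^{−1/2}. If the first-order stationarity condition ½ P^{−1} log(P P₀^{−1}) + (h/2) S = 0 holds, then P P₀^{−1} = exp(−h P S), where exp denotes the matrix exponential. -/
/-! Conjugating by `Q = P₀^{1/2}`, the stationarity condition says `Q log(M) Q⁻¹ = -h P S` with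
`M = P₀^{-1/2} P P₀^{-1/2}` positive definite. Exponentiating and using
`exp (Q X Q⁻¹) = Q exp(X) Q⁻¹` and `exp (log M) = M` gives
`exp (-h P S) = P₀^{1/2} P₀^{-1/2} P P₀^{-1/2} P₀^{-1/2} = P P₀⁻¹`. The power and logarithm
identities come from Mathlib's continuous functional calculus, with which `matFun` agrees on
symmetric matrices. -/

open Matrix

/-- The real power `A^t` of a real symmetric positive definite matrix. -/
noncomputable def matPow {n : ℕ} (A : Matrix (Fin n) (Fin n) ℝ) (t : ℝ) :
    Matrix (Fin n) (Fin n) ℝ :=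
  matFun (fun x => x ^ t) A

theorem Matrix.PosDef.pos_of_mem_spectrum {ι : Type*} [Fintype ι] [DecidableEq ι]
    {A : Matrix ι ι ℝ} (hA : A.PosDef) {x : ℝ} (hx : x ∈ spectrum ℝ A) : 0 < x := by
  obtain ⟨i, rfl⟩ := hA.isHermitian.spectrum_real_eq_range_eigenvalues ▸ hx
  exact hA.eigenvalues_pos i

theorem Matrix.IsHermitian.cfc_real_exp {ι : Type*} [Fintype ι] [DecidableEq ι]
    {A : Matrix ι ι ℝ} (hA : A.IsHermitian) : cfc Real.exp A = NormedSpace.exp A := by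
  -- The library lemma needs a normed ring; under `Norms.Operator` instance search no longer finds
  -- the functional calculus of matrices, so it is passed explicitly.
  have inst : ContinuousFunctionalCalculus ℝ (Matrix ι ι ℝ) IsSelfAdjoint := inferInstance
  open scoped Norms.Operator in
  exact @CFC.real_exp_eq_normedSpace_exp (Matrix ι ι ℝ) _ _ _ inst _ hA

section MatFun

variable {n : ℕ}

theorem matFun_eq_cfc (f : ℝ → ℝ) {A : Matrix (Fin n) (Fin n) ℝ} (hA : A.IsHermitian) :
    matFun f A = cfc f A := by
  rw [matFun, dif_pos hA, hA.cfc_eq, IsHermitian.cfc, Unitary.conjStarAlgAut_apply]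
  rfl

theorem matFun_isHermitian (f : ℝ → ℝ) (A : Matrix (Fin n) (Fin n) ℝ) :
    (matFun f A).IsHermitian := by
  by_cases hA : A.IsHermitian
  · rw [matFun_eq_cfc f hA]
    exact cfc_predicate f A
  · rw [matFun, dif_neg hA]
    exact isHermitian_zero

theorem matPow_add {A : Matrix (Fin n) (Fin n) ℝ} (hA : A.PosDef) (s t : ℝ) :
    matPow A s * matPow A t = matPow A (s + t) := by
  have hcont {f : ℝ → ℝ} : ContinuousOn f (spectrum ℝ A) :=
    A.finite_real_spectrum.continuousOn f
  simp only [matPow, matFun_eq_cfc _ hA.isHermitian]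
  rw [← cfc_mul _ _ A hcont hcont]
  exact cfc_congr fun x hx => (Real.rpow_add (hA.pos_of_mem_spectrum hx) s t).symm

theorem matPow_zero {A : Matrix (Fin n) (Fin n) ℝ} (hA : A.IsHermitian) : matPow A 0 = 1 := by
  simp only [matPow, matFun_eq_cfc _ hA, Real.rpow_zero]
  exact cfc_const_one ℝ A

theorem matPow_one {A : Matrix (Fin n) (Fin n) ℝ} (hA : A.IsHermitian) : matPow A 1 = A := by
  simp only [matPow, matFun_eq_cfc _ hA, Real.rpow_one]
  exact cfc_id' ℝ A

theorem matPow_neg_one {A : Matrix (Fin n) (Fin n) ℝ} (hA : A.PosDef) :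
    matPow A (-1) = A⁻¹ := by
  refine (inv_eq_left_inv ?_).symm
  have := matPow_add hA (-1) 1
  rwa [neg_add_cancel, matPow_zero hA.isHermitian, matPow_one hA.isHermitian] at this

theorem exp_matLog {A : Matrix (Fin n) (Fin n) ℝ} (hA : A.PosDef) :
    NormedSpace.exp (matLog A) = A := by
  have hA' : IsSelfAdjoint A := hA.isHermitian.isSelfAdjoint
  have hlog : (cfc Real.log A).IsHermitian := cfc_predicate Real.log A
  rw [matLog, matFun_eq_cfc _ hA.isHermitian, ← hlog.cfc_real_exp,
    ← cfc_comp Real.exp Real.log A hA' ((A.finite_real_spectrum.image _).continuousOn _)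
      (A.finite_real_spectrum.continuousOn _)]
  conv_rhs => rw [← cfc_id ℝ A hA']
  exact cfc_congr fun x hx => Real.exp_log (hA.pos_of_mem_spectrum hx)

end MatFun

theorem stationarity_implies_exp_general {n : ℕ} (P P₀ : Matrix (Fin n) (Fin n) ℝ)
    (hP : P.PosDef) (hP₀ : P₀.PosDef)
    (S : Matrix (Fin n) (Fin n) ℝ) (h : ℝ)
    (hstat : (1/2 : ℝ) •
        (P⁻¹ * (matPow P₀ ((1 : ℝ)/2) *
          matLog (matPow P₀ (-(1 : ℝ)/2) * P * matPow P₀ (-(1 : ℝ)/2)) *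
            matPow P₀ (-(1 : ℝ)/2))) + (h/2) • S = 0) :
    P * P₀⁻¹ = NormedSpace.exp (-(h • (P * S))) := by
  set Q := matPow P₀ ((1 : ℝ)/2)
  set R := matPow P₀ (-(1 : ℝ)/2)
  have hQR : Q * R = 1 := by rw [matPow_add hP₀]; norm_num [matPow_zero hP₀.isHermitian]
  have hRQ : R * Q = 1 := by rw [matPow_add hP₀]; norm_num [matPow_zero hP₀.isHermitian]
  have hRR : R * R = P₀⁻¹ := by rw [matPow_add hP₀]; norm_num [matPow_neg_one hP₀]
  have hQinv : Q⁻¹ = R := inv_eq_right_inv hQR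
  have hR : Rᴴ = R := (matFun_isHermitian _ P₀).eq
  have hM : (R * P * R).PosDef := by
    have := hP.conjTranspose_mul_mul_same
      (mulVec_injective_iff_isUnit.mpr ⟨⟨R, Q, hRQ, hQR⟩, rfl⟩)
    rwa [hR] at this
  have hinv : P⁻¹ * (Q * matLog (R * P * R) * R) = -(h • S) := by
    linear_combination (norm := module) (2 : ℝ) • hstat
  have hlog := congrArg (P * ·) hinv
  simp only [mul_nonsing_inv_cancel_left _ _ hP.det_pos.ne'.isUnit, mul_neg,
    Matrix.mul_smul] at hlog
  calc P * P₀⁻¹ = (Q * R) * P * (R * R) := by rw [hQR, hRR, one_mul]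
    _ = Q * (R * P * R) * R := by simp only [mul_assoc]
    _ = Q * NormedSpace.exp (matLog (R * P * R)) * Q⁻¹ := by rw [exp_matLog hM, hQinv]
    _ = NormedSpace.exp (-(h • (P * S))) := by
      rw [← exp_conj _ _ ⟨⟨Q, R, hQR, hRQ⟩, rfl⟩, hQinv, hlog]

/-- If the first-order stationarity condition
`½ P⁻¹ log(P P₀⁻¹) + (h/2) S = 0` holds, where
`log(P P₀⁻¹) := P₀^{1/2} log(P₀^{-1/2} P P₀^{-1/2}) P₀^{-1/2}`, then
`P P₀⁻¹ = exp(-h P S)`. -/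
theorem stationarity_implies_exp {n : ℕ} (P P₀ : Matrix (Fin n) (Fin n) ℝ)
    (hP : P.PosDef) (hP₀ : P₀.PosDef)
    (S : Matrix (Fin n) (Fin n) ℝ) (hS : S.IsHermitian) (h : ℝ)
    (hstat : (1/2 : ℝ) •
        (P⁻¹ * (matPow P₀ ((1 : ℝ)/2) *
          matLog (matPow P₀ (-(1 : ℝ)/2) * P * matPow P₀ (-(1 : ℝ)/2)) *
            matPow P₀ (-(1 : ℝ)/2))) + (h/2) • S = 0) :
    P * P₀⁻¹ = NormedSpace.exp (-(h • (P * S))) :=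
  stationarity_implies_exp_general P P₀ hP hP₀ S h hstat
end
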